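/- There exists a constant C > 0, depending only on H, such that for each fixed t ∈ (0,1], the function s ↦ C(s,t) is differentiable at every s ∈ (0,t), and its derivative satisfies |∂_s C(s,t)| ≤ C ((t−s)^{2H−1} + s^{2H−1}) for all 0 < s < t ≤ 1. -/

import Mathlib

open MeasureTheory intervalIntegral

open Set

private lemma rl_int_rpow (r c : ℝ) (hr : -1 < r) :
    ∫ w in (0:ℝ)..c, w ^ r = c ^ (r+1) / (r+1) := by
  rw [integral_rpow (Or.inl hr), Real.zero_rpow (by linarith : r+1 ≠ 0), sub_zero]

private lemma rl_one_sub_int (r : ℝ) (hr : -1 < r) :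
    IntervalIntegrable (fun v : ℝ => (1-v) ^ r) volume 0 1 := by
  have h := (intervalIntegrable_rpow' hr (a := 0) (b := 1)).comp_sub_left 1
  simpa using h.symm

/-- Integrability of the key kernel. -/
private lemma rl_g_int (H A B : ℝ) (hH0 : 0 < H) (hH1 : H < 1/2) (hA : 0 < A) (hB : 0 < B) :
    IntervalIntegrable (fun w : ℝ => (A + B*w) ^ (H - 1/2 - 1) * w ^ (H - 1/2)) volume 0 1 := by
  apply IntervalIntegrable.mono_fun'
    (g := fun w : ℝ => A ^ (H - 1/2 - 1) * w ^ (H - 1/2))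
  · exact (intervalIntegrable_rpow' (by linarith)).const_mul _
  · exact (by fun_prop : Measurable fun w : ℝ => (A + B*w) ^ (H - 1/2 - 1) * w ^ (H - 1/2)).aestronglyMeasurable
  · filter_upwards [ae_restrict_mem measurableSet_uIoc] with w hw
    rw [Set.uIoc_of_le (zero_le_one' ℝ)] at hw
    have hw0 : 0 < w := hw.1
    have hABw : 0 < A + B * w := by nlinarith
    rw [Real.norm_eq_abs, abs_of_nonneg (by positivity)]
    have h1 : (A + B*w) ^ (H - 1/2 - 1) ≤ A ^ (H - 1/2 - 1) :=
      Real.rpow_le_rpow_of_nonpos hA (by nlinarith) (by linarith)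
    exact mul_le_mul_of_nonneg_right h1 (Real.rpow_nonneg hw0.le _)

/-- Key bound on the kernel integral. -/
private lemma rl_J_bound (H A B : ℝ) (hH0 : 0 < H) (hH1 : H < 1/2) (hA : 0 < A) (hB : 0 < B) :
    ∫ w in (0:ℝ)..1, (A + B*w) ^ (H - 1/2 - 1) * w ^ (H - 1/2)
      ≤ (1/(H+1/2) + 1/(1-2*H)) * (A ^ (2*H-1) * B ^ (-(H+1/2))) := by
  have h2H : (0:ℝ) < 1 - 2*H := by linarith
  have hP : (0:ℝ) ≤ A ^ (2*H-1) * B ^ (-(H+1/2)) := by positivity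
  have hAA : A ^ (H - 1/2 - 1) * A ^ (H + 1/2) = A ^ (2*H-1) := by
    rw [← Real.rpow_add hA]; congr 1; ring
  rcases le_total A B with hAB | hAB
  · -- split at c = A / B
    set c : ℝ := A / B with hc
    have hc0 : 0 < c := div_pos hA hB
    have hc1 : c ≤ 1 := (div_le_one hB).mpr hAB
    have hsub1 : uIcc (0:ℝ) c ⊆ uIcc (0:ℝ) 1 := by
      rw [uIcc_of_le hc0.le, uIcc_of_le (zero_le_one' ℝ)]
      exact Icc_subset_Icc le_rfl hc1
    have hsub2 : uIcc c (1:ℝ) ⊆ uIcc (0:ℝ) 1 := by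
      rw [uIcc_of_le hc1, uIcc_of_le (zero_le_one' ℝ)]
      exact Icc_subset_Icc hc0.le le_rfl
    have hint := rl_g_int H A B hH0 hH1 hA hB
    have hint1 := hint.mono_set hsub1
    have hint2 := hint.mono_set hsub2
    have hsplit : (∫ w in (0:ℝ)..1, (A + B*w) ^ (H - 1/2 - 1) * w ^ (H - 1/2))
        = (∫ w in (0:ℝ)..c, (A + B*w) ^ (H - 1/2 - 1) * w ^ (H - 1/2))
          + ∫ w in c..(1:ℝ), (A + B*w) ^ (H - 1/2 - 1) * w ^ (H - 1/2) :=
      (integral_add_adjacent_intervals hint1 hint2).symm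
    have hpiece1 : (∫ w in (0:ℝ)..c, (A + B*w) ^ (H - 1/2 - 1) * w ^ (H - 1/2))
        ≤ A ^ (2*H-1) * B ^ (-(H+1/2)) * (1/(H+1/2)) := by
      have hmono : (∫ w in (0:ℝ)..c, (A + B*w) ^ (H - 1/2 - 1) * w ^ (H - 1/2))
          ≤ ∫ w in (0:ℝ)..c, A ^ (H - 1/2 - 1) * w ^ (H - 1/2) := by
        apply integral_mono_on hc0.le hint1
          ((intervalIntegrable_rpow' (by linarith)).const_mul _)
        intro w hw
        have hw0 : 0 ≤ w := hw.1
        exact mul_le_mul_of_nonneg_right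
          (Real.rpow_le_rpow_of_nonpos hA (by nlinarith) (by linarith))
          (Real.rpow_nonneg hw0 _)
      have hval : (∫ w in (0:ℝ)..c, A ^ (H - 1/2 - 1) * w ^ (H - 1/2))
          = A ^ (H - 1/2 - 1) * (c ^ (H + 1/2) / (H + 1/2)) := by
        rw [intervalIntegral.integral_const_mul, rl_int_rpow _ _ (by linarith),
          show H - 1/2 + 1 = H + 1/2 from by ring]
      have hcval : c ^ (H + 1/2) = A ^ (H + 1/2) * B ^ (-(H+1/2)) := by
        rw [hc, Real.div_rpow hA.le hB.le, Real.rpow_neg hB.le, div_eq_mul_inv]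
      calc (∫ w in (0:ℝ)..c, (A + B*w) ^ (H - 1/2 - 1) * w ^ (H - 1/2))
          ≤ A ^ (H - 1/2 - 1) * (c ^ (H + 1/2) / (H + 1/2)) := hval ▸ hmono
        _ = A ^ (2*H-1) * B ^ (-(H+1/2)) * (1/(H+1/2)) := by
            rw [hcval, ← hAA]; ring
    have hpiece2 : (∫ w in c..(1:ℝ), (A + B*w) ^ (H - 1/2 - 1) * w ^ (H - 1/2))
        ≤ A ^ (2*H-1) * B ^ (-(H+1/2)) * (1/(1-2*H)) := by
      have hmono : (∫ w in c..(1:ℝ), (A + B*w) ^ (H - 1/2 - 1) * w ^ (H - 1/2))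
          ≤ ∫ w in c..(1:ℝ), B ^ (H - 1/2 - 1) * w ^ (2*H - 2) := by
        apply integral_mono_on hc1 hint2
        · apply IntervalIntegrable.const_mul
          apply intervalIntegrable_rpow
          right
          rw [uIcc_of_le hc1]
          intro h; exact absurd h.1 (by linarith)
        · intro w hw
          have hw0 : 0 < w := lt_of_lt_of_le hc0 hw.1
          have h1 : (A + B*w) ^ (H - 1/2 - 1) ≤ (B*w) ^ (H - 1/2 - 1) :=
            Real.rpow_le_rpow_of_nonpos (by positivity) (by nlinarith) (by linarith)
          calc (A + B*w) ^ (H - 1/2 - 1) * w ^ (H - 1/2)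
              ≤ (B*w) ^ (H - 1/2 - 1) * w ^ (H - 1/2) :=
                mul_le_mul_of_nonneg_right h1 (Real.rpow_nonneg hw0.le _)
            _ = B ^ (H - 1/2 - 1) * w ^ (2*H - 2) := by
                rw [Real.mul_rpow hB.le hw0.le, mul_assoc, ← Real.rpow_add hw0]
                congr 1; ring
      have hval : (∫ w in c..(1:ℝ), w ^ (2*H - 2)) = (1 - c ^ (2*H-1)) / (2*H-1) := by
        rw [integral_rpow (Or.inr ⟨by intro h; exact absurd h (by norm_num; linarith), by
          rw [uIcc_of_le hc1]; intro h; exact absurd h.1 (by linarith)⟩)]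
        rw [show 2*H-2+1 = 2*H-1 from by ring]
        norm_num [Real.one_rpow]
      have hcval : c ^ (2*H-1) = A ^ (2*H-1) * B ^ (-(2*H-1)) := by
        rw [hc, Real.div_rpow hA.le hB.le, Real.rpow_neg hB.le, div_eq_mul_inv]
      have hBB : B ^ (H - 1/2 - 1) * B ^ (-(2*H-1)) = B ^ (-(H+1/2)) := by
        rw [← Real.rpow_add hB]; congr 1; ring
      calc (∫ w in c..(1:ℝ), (A + B*w) ^ (H - 1/2 - 1) * w ^ (H - 1/2))
          ≤ B ^ (H - 1/2 - 1) * ((1 - c ^ (2*H-1)) / (2*H-1)) := by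
            rw [← hval, ← intervalIntegral.integral_const_mul]; exact hmono
        _ ≤ B ^ (H - 1/2 - 1) * (c ^ (2*H-1) / (1-2*H)) := by
            apply mul_le_mul_of_nonneg_left _ (Real.rpow_nonneg hB.le _)
            rw [show (1 - c ^ (2*H-1)) / (2*H-1) = (c ^ (2*H-1) - 1) / (1-2*H) from by
              rw [div_eq_div_iff (by linarith) (by linarith)]; ring]
            rw [div_le_div_iff₀ h2H h2H]
            nlinarith [Real.rpow_nonneg hc0.le (2*H-1)]
        _ = A ^ (2*H-1) * B ^ (-(H+1/2)) * (1/(1-2*H)) := by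
            rw [hcval, ← hBB]; ring
    rw [hsplit]
    calc _ ≤ A ^ (2*H-1) * B ^ (-(H+1/2)) * (1/(H+1/2))
            + A ^ (2*H-1) * B ^ (-(H+1/2)) * (1/(1-2*H)) := add_le_add hpiece1 hpiece2
      _ = (1/(H+1/2) + 1/(1-2*H)) * (A ^ (2*H-1) * B ^ (-(H+1/2))) := by ring
  · -- B ≤ A : bound directly
    have hmono : (∫ w in (0:ℝ)..1, (A + B*w) ^ (H - 1/2 - 1) * w ^ (H - 1/2))
        ≤ ∫ w in (0:ℝ)..1, A ^ (H - 1/2 - 1) * w ^ (H - 1/2) := by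
      apply integral_mono_on (zero_le_one' ℝ) (rl_g_int H A B hH0 hH1 hA hB)
        ((intervalIntegrable_rpow' (by linarith)).const_mul _)
      intro w hw
      exact mul_le_mul_of_nonneg_right
        (Real.rpow_le_rpow_of_nonpos hA (by nlinarith [hw.1]) (by linarith))
        (Real.rpow_nonneg hw.1 _)
    have hval : (∫ w in (0:ℝ)..1, A ^ (H - 1/2 - 1) * w ^ (H - 1/2))
        = A ^ (H - 1/2 - 1) * (1 / (H + 1/2)) := by
      rw [intervalIntegral.integral_const_mul, rl_int_rpow _ _ (by linarith),
        show H - 1/2 + 1 = H + 1/2 from by ring]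
      rw [Real.one_rpow]
    have hAB' : A ^ (H - 1/2 - 1) ≤ A ^ (2*H-1) * B ^ (-(H+1/2)) := by
      have h1 : A ^ (-(H+1/2)) ≤ B ^ (-(H+1/2)) :=
        Real.rpow_le_rpow_of_nonpos hB hAB (by linarith)
      calc A ^ (H - 1/2 - 1) = A ^ (2*H-1) * A ^ (-(H+1/2)) := by
            rw [← Real.rpow_add hA]; congr 1; ring
        _ ≤ A ^ (2*H-1) * B ^ (-(H+1/2)) :=
            mul_le_mul_of_nonneg_left h1 (Real.rpow_nonneg hA.le _)
    calc (∫ w in (0:ℝ)..1, (A + B*w) ^ (H - 1/2 - 1) * w ^ (H - 1/2))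
        ≤ A ^ (H - 1/2 - 1) * (1/(H+1/2)) := hval ▸ hmono
      _ ≤ (A ^ (2*H-1) * B ^ (-(H+1/2))) * (1/(H+1/2)) := by
          apply mul_le_mul_of_nonneg_right hAB' (by positivity)
      _ ≤ (1/(H+1/2) + 1/(1-2*H)) * (A ^ (2*H-1) * B ^ (-(H+1/2))) := by
          rw [mul_comm]
          apply mul_le_mul_of_nonneg_right _ hP
          have : 0 < 1/(1-2*H) := by positivity
          linarith

/-- The covariance function of the Riemann–Liouville fractional Brownian motion:
`C(s,t) = ∫₀^(min s t) (t-r)^(H-1/2) (s-r)^(H-1/2) dr`. -/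
noncomputable def rlCov (H s t : ℝ) : ℝ :=
  ∫ r in (0 : ℝ)..(min s t), (t - r) ^ (H - 1/2) * (s - r) ^ (H - 1/2)

set_option maxHeartbeats 1000000 in
/-- for fixed `t ∈ (0,1]`, the map `s ↦ C(s,t)` is differentiable at every
`s ∈ (0,t)` with `|∂ₛ C(s,t)| ≤ C ((t-s)^(2H-1) + s^(2H-1))`. -/
theorem rlCov_deriv_s_bound (H : ℝ) (hH0 : 0 < H) (hH1 : H < 1/2) :
    ∃ C > 0, ∀ s t : ℝ, 0 < s → s < t → t ≤ 1 →
      DifferentiableAt ℝ (fun u => rlCov H u t) s ∧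
      |deriv (fun u => rlCov H u t) s| ≤ C * ((t - s) ^ (2 * H - 1) + s ^ (2 * H - 1)) := by
  have h2H : (0:ℝ) < 1 - 2*H := by linarith
  obtain ⟨C₀, hC₀def⟩ : ∃ x : ℝ, x = 1/(H+1/2) + 1/(1-2*H) := ⟨_, rfl⟩
  have hC₀ : 0 < C₀ := by
    rw [hC₀def]
    have h1 : (0:ℝ) < 1/(H+1/2) := by positivity
    have h2 : (0:ℝ) < 1/(1-2*H) := by positivity
    linarith
  refine ⟨(H+1/2)/(2*H) + (1/2-H)*C₀ + 1, by
    have h3 : (0:ℝ) < (H+1/2)/(2*H) := by positivity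
    have h4 : (0:ℝ) < (1/2-H)*C₀ := mul_pos (by linarith) hC₀
    linarith, ?_⟩
  intro s t hs0 hst ht1
  have ht0 : 0 < t := hs0.trans hst
  have hts : 0 < t - s := by linarith
  obtain ⟨ε, hεdef⟩ : ∃ x : ℝ, x = (t-s)/2 := ⟨_, rfl⟩
  have hε0 : 0 < ε := by rw [hεdef]; linarith
  -- key positivity on the ball
  have hkey : ∀ x ∈ Metric.ball s ε, ∀ v ∈ Set.Ioc (0:ℝ) 1, ε ≤ t - x*v := by
    intro x hx v hv
    rw [Metric.mem_ball, Real.dist_eq, abs_sub_lt_iff] at hx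
    have hxle : x ≤ s + ε := by linarith [hx.1]
    have h1 : x*v ≤ s + ε := by
      nlinarith [mul_nonneg (show (0:ℝ) ≤ s+ε-x by linarith) hv.1.le,
        mul_nonneg (show (0:ℝ) ≤ s+ε by linarith) (show (0:ℝ) ≤ 1-v by linarith [hv.2])]
    rw [hεdef] at h1 ⊢
    linarith
  -- integrability of F s
  have hF_int : IntervalIntegrable
      (fun v => (t - s*v) ^ (H - 1/2) * (1-v) ^ (H - 1/2)) volume 0 1 := by
    apply IntervalIntegrable.mono_fun'
      (g := fun v : ℝ => (t-s) ^ (H - 1/2) * (1-v) ^ (H - 1/2))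
    · exact (rl_one_sub_int _ (by linarith)).const_mul _
    · exact (by fun_prop :
        Measurable fun v : ℝ => (t - s*v) ^ (H - 1/2) * (1-v) ^ (H - 1/2)).aestronglyMeasurable
    · filter_upwards [ae_restrict_mem measurableSet_uIoc] with v hv
      rw [Set.uIoc_of_le (zero_le_one' ℝ)] at hv
      have h1v : (0:ℝ) ≤ 1 - v := by linarith [hv.2]
      have hbase : t - s ≤ t - s*v := by nlinarith [hv.1, hv.2, hs0]
      rw [Real.norm_eq_abs, abs_of_nonneg (mul_nonneg
        (Real.rpow_nonneg (by linarith : (0:ℝ) ≤ t - s*v) _) (Real.rpow_nonneg h1v _))]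
      exact mul_le_mul_of_nonneg_right
        (Real.rpow_le_rpow_of_nonpos hts hbase (by linarith)) (Real.rpow_nonneg h1v _)
  -- differentiation under the integral sign
  obtain ⟨hF'int, hψ⟩ := intervalIntegral.hasDerivAt_integral_of_dominated_loc_of_deriv_le
    (μ := volume) (a := 0) (b := 1) (x₀ := s)
    (F := fun x v => (t - x*v) ^ (H - 1/2) * (1-v) ^ (H - 1/2))
    (F' := fun x v => ((0 - v) * (H - 1/2) * (t - x*v) ^ (H - 1/2 - 1)) * (1-v) ^ (H - 1/2))
    (bound := fun v => ((1/2 - H) * ε ^ (H - 1/2 - 1)) * (1-v) ^ (H - 1/2))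
    (Metric.ball_mem_nhds s hε0)
    (Filter.Eventually.of_forall fun x => ((by fun_prop :
      Measurable fun v : ℝ => (t - x*v) ^ (H - 1/2) * (1-v) ^ (H - 1/2))).aestronglyMeasurable)
    hF_int
    ((by fun_prop : Measurable fun v : ℝ =>
      ((0 - v) * (H - 1/2) * (t - s*v) ^ (H - 1/2 - 1)) * (1-v) ^ (H - 1/2)).aestronglyMeasurable)
    (Filter.Eventually.of_forall (fun v hv x hx => by
      rw [Set.uIoc_of_le (zero_le_one' ℝ)] at hv
      have h1v : (0:ℝ) ≤ 1 - v := by linarith [hv.2]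
      have htx : ε ≤ t - x*v := hkey x hx v hv
      have htx0 : 0 < t - x*v := lt_of_lt_of_le hε0 htx
      have habs : ‖((0 - v) * (H - 1/2) * (t - x*v) ^ (H - 1/2 - 1)) * (1-v) ^ (H - 1/2)‖
          = v * (1/2 - H) * (t - x*v) ^ (H - 1/2 - 1) * (1-v) ^ (H - 1/2) := by
        rw [Real.norm_eq_abs, abs_mul, abs_mul, abs_mul,
          abs_of_nonneg (Real.rpow_nonneg htx0.le _), abs_of_nonneg (Real.rpow_nonneg h1v _),
          abs_of_neg (by linarith : H - 1/2 < 0), abs_of_nonpos (by linarith [hv.1] : 0 - v ≤ 0)]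
        ring
      rw [habs]
      calc v * (1/2 - H) * (t - x*v) ^ (H - 1/2 - 1) * (1-v) ^ (H - 1/2)
          ≤ 1 * (1/2 - H) * ε ^ (H - 1/2 - 1) * (1-v) ^ (H - 1/2) := by
            apply mul_le_mul_of_nonneg_right _ (Real.rpow_nonneg h1v _)
            exact mul_le_mul (mul_le_mul_of_nonneg_right hv.2 (by linarith))
              (Real.rpow_le_rpow_of_nonpos hε0 htx (by linarith))
              (Real.rpow_nonneg htx0.le _) (by linarith)
        _ = ((1/2 - H) * ε ^ (H - 1/2 - 1)) * (1-v) ^ (H - 1/2) := by ring))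
    ((rl_one_sub_int (H - 1/2) (by linarith)).const_mul _)
    (Filter.Eventually.of_forall (fun v hv x hx => by
      rw [Set.uIoc_of_le (zero_le_one' ℝ)] at hv
      have htx0 : 0 < t - x*v := lt_of_lt_of_le hε0 (hkey x hx v hv)
      exact (((hasDerivAt_const x t).sub (hasDerivAt_mul_const v)).rpow_const
        (Or.inl htx0.ne')).mul_const _))
  -- the product function and its derivative
  have hpow : HasDerivAt (fun u : ℝ => u ^ (H + 1/2)) ((H + 1/2) * s ^ (H + 1/2 - 1)) s :=
    Real.hasDerivAt_rpow_const (Or.inl hs0.ne')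
  have hφ := hpow.mul hψ
  -- rlCov agrees with the product near s
  have heq : (fun u => rlCov H u t) =ᶠ[nhds s]
      fun u => u ^ (H + 1/2) * ∫ v in (0:ℝ)..1, (t - u*v) ^ (H - 1/2) * (1-v) ^ (H - 1/2) := by
    filter_upwards [Ioo_mem_nhds hs0 hst] with u hu
    obtain ⟨hu0, hut⟩ := hu
    have hcongr : ∀ v ∈ Set.uIcc (0:ℝ) 1,
        (t - v*u) ^ (H - 1/2) * (u - v*u) ^ (H - 1/2)
          = u ^ (H - 1/2) * ((t - u*v) ^ (H - 1/2) * (1-v) ^ (H - 1/2)) := by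
      intro v hv
      rw [Set.uIcc_of_le (zero_le_one' ℝ)] at hv
      rw [show u - v*u = u * (1-v) from by ring,
        Real.mul_rpow hu0.le (by linarith [hv.2]), mul_comm v u]
      ring
    have hsub := intervalIntegral.integral_comp_mul_right
      (fun r => (t - r) ^ (H - 1/2) * (u - r) ^ (H - 1/2)) hu0.ne' (a := 0) (b := 1)
    rw [zero_mul, one_mul, smul_eq_mul] at hsub
    have hval : rlCov H u t
        = u * ∫ v in (0:ℝ)..1, (t - v*u) ^ (H - 1/2) * (u - v*u) ^ (H - 1/2) := by
      rw [rlCov, min_eq_left hut.le, hsub, ← mul_assoc, mul_inv_cancel₀ hu0.ne', one_mul]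
    rw [hval, intervalIntegral.integral_congr hcongr, intervalIntegral.integral_const_mul,
      show H + 1/2 = 1 + (H - 1/2) from by ring, Real.rpow_add hu0, Real.rpow_one, mul_assoc]
  have hrl : HasDerivAt (fun u => rlCov H u t)
      ((H + 1/2) * s ^ (H + 1/2 - 1)
          * (∫ v in (0:ℝ)..1, (t - s*v) ^ (H - 1/2) * (1-v) ^ (H - 1/2))
        + s ^ (H + 1/2) * ∫ v in (0:ℝ)..1,
            ((0 - v) * (H - 1/2) * (t - s*v) ^ (H - 1/2 - 1)) * (1-v) ^ (H - 1/2)) s :=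
    hφ.congr_of_eventuallyEq heq
  refine ⟨hrl.differentiableAt, ?_⟩
  rw [hrl.deriv]
  -- bound the first term
  have hIψ0 : 0 ≤ ∫ v in (0:ℝ)..1, (t - s*v) ^ (H - 1/2) * (1-v) ^ (H - 1/2) := by
    apply intervalIntegral.integral_nonneg zero_le_one
    intro v hv
    exact mul_nonneg (Real.rpow_nonneg
      (by nlinarith [mul_nonneg hs0.le (sub_nonneg.mpr hv.2)] : (0:ℝ) ≤ t - s*v) _)
      (Real.rpow_nonneg (by linarith [hv.2]) _)
  have hIψle : (∫ v in (0:ℝ)..1, (t - s*v) ^ (H - 1/2) * (1-v) ^ (H - 1/2))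
      ≤ s ^ (H - 1/2) * (1/(2*H)) := by
    have hmono : (∫ v in (0:ℝ)..1, (t - s*v) ^ (H - 1/2) * (1-v) ^ (H - 1/2))
        ≤ ∫ v in (0:ℝ)..1, s ^ (H - 1/2) * (1-v) ^ (2*H-1) := by
      apply intervalIntegral.integral_mono_on zero_le_one hF_int
        ((rl_one_sub_int _ (by linarith)).const_mul _)
      intro v hv
      rcases eq_or_lt_of_le hv.2 with h1 | h1
      · subst h1
        norm_num [Real.zero_rpow (show H - 1/2 ≠ 0 by linarith),
          Real.zero_rpow (show 2*H - 1 ≠ 0 by linarith)]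
      · have h1v : 0 < 1 - v := by linarith
        have hbase : 0 < s * (1-v) := by positivity
        have hle : s * (1-v) ≤ t - s*v := by nlinarith
        calc (t - s*v) ^ (H - 1/2) * (1-v) ^ (H - 1/2)
            ≤ (s*(1-v)) ^ (H - 1/2) * (1-v) ^ (H - 1/2) :=
              mul_le_mul_of_nonneg_right
                (Real.rpow_le_rpow_of_nonpos hbase hle (by linarith))
                (Real.rpow_nonneg h1v.le _)
          _ = s ^ (H - 1/2) * (1-v) ^ (2*H-1) := by
              rw [Real.mul_rpow hs0.le h1v.le, mul_assoc, ← Real.rpow_add h1v,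
                show H - 1/2 + (H - 1/2) = 2*H-1 from by ring]
    have hval : (∫ v in (0:ℝ)..1, s ^ (H - 1/2) * (1-v) ^ (2*H-1))
        = s ^ (H - 1/2) * (1/(2*H)) := by
      rw [intervalIntegral.integral_const_mul]
      congr 1
      have h := intervalIntegral.integral_comp_sub_left
        (fun w : ℝ => w ^ (2*H-1)) 1 (a := 0) (b := 1)
      rw [sub_self, sub_zero] at h
      rw [h, rl_int_rpow _ _ (by linarith), show 2*H-1+1 = 2*H from by ring, Real.one_rpow]
    exact hval ▸ hmono
  -- bound the second term
  have hDabs : |∫ v in (0:ℝ)..1,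
        ((0 - v) * (H - 1/2) * (t - s*v) ^ (H - 1/2 - 1)) * (1-v) ^ (H - 1/2)|
      ≤ (1/2-H) * (C₀ * ((t-s) ^ (2*H-1) * s ^ (-(H+1/2)))) := by
    have hRHSint : IntervalIntegrable
        (fun v : ℝ => (1/2-H) * ((t-s + s*(1-v)) ^ (H - 1/2 - 1) * (1-v) ^ (H - 1/2)))
        volume 0 1 := by
      have h := (rl_g_int H (t-s) s hH0 hH1 hts hs0).comp_sub_left 1
      norm_num at h
      exact (h.symm).const_mul _
    calc |∫ v in (0:ℝ)..1,
          ((0 - v) * (H - 1/2) * (t - s*v) ^ (H - 1/2 - 1)) * (1-v) ^ (H - 1/2)|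
        ≤ ∫ v in (0:ℝ)..1,
          |((0 - v) * (H - 1/2) * (t - s*v) ^ (H - 1/2 - 1)) * (1-v) ^ (H - 1/2)| :=
          intervalIntegral.abs_integral_le_integral_abs zero_le_one
      _ ≤ ∫ v in (0:ℝ)..1,
          (1/2-H) * ((t-s + s*(1-v)) ^ (H - 1/2 - 1) * (1-v) ^ (H - 1/2)) := by
          apply intervalIntegral.integral_mono_on zero_le_one hF'int.abs hRHSint
          intro v hv
          have h1v : (0:ℝ) ≤ 1 - v := by linarith [hv.2]
          have hrw : t - s*v = t - s + s*(1-v) := by ring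
          have hb0 : 0 < t - s + s*(1-v) := by nlinarith [mul_nonneg hs0.le h1v]
          rw [abs_mul, abs_mul, abs_mul, hrw,
            abs_of_nonneg (Real.rpow_nonneg hb0.le _), abs_of_nonneg (Real.rpow_nonneg h1v _),
            abs_of_neg (by linarith : H - 1/2 < 0), abs_of_nonpos (by linarith [hv.1] : 0 - v ≤ 0)]
          have hXY : (0:ℝ) ≤ (t-s + s*(1-v)) ^ (H - 1/2 - 1) * (1-v) ^ (H - 1/2) :=
            mul_nonneg (Real.rpow_nonneg hb0.le _) (Real.rpow_nonneg h1v _)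
          nlinarith [mul_nonneg (mul_nonneg (show (0:ℝ) ≤ 1/2-H by linarith) hXY) h1v]
      _ = (1/2-H) * ∫ v in (0:ℝ)..1,
          (t-s + s*(1-v)) ^ (H - 1/2 - 1) * (1-v) ^ (H - 1/2) :=
          intervalIntegral.integral_const_mul _ _
      _ = (1/2-H) * ∫ w in (0:ℝ)..1, (t-s + s*w) ^ (H - 1/2 - 1) * w ^ (H - 1/2) := by
          congr 1
          have h := intervalIntegral.integral_comp_sub_left
            (fun w : ℝ => (t-s + s*w) ^ (H - 1/2 - 1) * w ^ (H - 1/2)) 1 (a := 0) (b := 1)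
          rw [sub_self, sub_zero] at h
          exact h
      _ ≤ (1/2-H) * (C₀ * ((t-s) ^ (2*H-1) * s ^ (-(H+1/2)))) :=
          mul_le_mul_of_nonneg_left (hC₀def ▸ rl_J_bound H (t-s) s hH0 hH1 hts hs0) (by linarith)
  -- assemble
  have hs1 : s ^ (H+1/2) * s ^ (-(H+1/2)) = 1 := by
    rw [← Real.rpow_add hs0, add_neg_cancel, Real.rpow_zero]
  have hss : s ^ (H + 1/2 - 1) * s ^ (H - 1/2) = s ^ (2*H-1) := by
    rw [← Real.rpow_add hs0, show H + 1/2 - 1 + (H - 1/2) = 2*H-1 from by ring]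
  have hterm1 : (H + 1/2) * s ^ (H + 1/2 - 1)
        * (∫ v in (0:ℝ)..1, (t - s*v) ^ (H - 1/2) * (1-v) ^ (H - 1/2))
      ≤ (H+1/2) * (1/(2*H)) * s ^ (2*H-1) := by
    calc (H + 1/2) * s ^ (H + 1/2 - 1)
          * (∫ v in (0:ℝ)..1, (t - s*v) ^ (H - 1/2) * (1-v) ^ (H - 1/2))
        ≤ (H + 1/2) * s ^ (H + 1/2 - 1) * (s ^ (H - 1/2) * (1/(2*H))) :=
          mul_le_mul_of_nonneg_left hIψle (by positivity)
      _ = (H+1/2) * (1/(2*H)) * s ^ (2*H-1) := by rw [← hss]; ring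
  have hterm2 : s ^ (H+1/2) * |∫ v in (0:ℝ)..1,
        ((0 - v) * (H - 1/2) * (t - s*v) ^ (H - 1/2 - 1)) * (1-v) ^ (H - 1/2)|
      ≤ (1/2-H) * C₀ * (t-s) ^ (2*H-1) := by
    calc s ^ (H+1/2) * |∫ v in (0:ℝ)..1,
          ((0 - v) * (H - 1/2) * (t - s*v) ^ (H - 1/2 - 1)) * (1-v) ^ (H - 1/2)|
        ≤ s ^ (H+1/2) * ((1/2-H) * (C₀ * ((t-s) ^ (2*H-1) * s ^ (-(H+1/2))))) :=
          mul_le_mul_of_nonneg_left hDabs (Real.rpow_nonneg hs0.le _)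
      _ = (1/2-H) * C₀ * (t-s) ^ (2*H-1) * (s ^ (H+1/2) * s ^ (-(H+1/2))) := by ring
      _ = (1/2-H) * C₀ * (t-s) ^ (2*H-1) := by rw [hs1, mul_one]
  refine le_trans (abs_add_le _ _) ?_
  rw [abs_of_nonneg (mul_nonneg (mul_nonneg (by linarith : (0:ℝ) ≤ H + 1/2)
      (Real.rpow_nonneg hs0.le _)) hIψ0),
    abs_mul, abs_of_nonneg (Real.rpow_nonneg hs0.le (H+1/2))]
  have hX : (0:ℝ) ≤ (t-s) ^ (2*H-1) := Real.rpow_nonneg hts.le _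
  have hY : (0:ℝ) ≤ s ^ (2*H-1) := Real.rpow_nonneg hs0.le _
  have h3 : (0:ℝ) < (H+1/2)/(2*H) := by positivity
  have h4 : (0:ℝ) < (1/2-H)*C₀ := mul_pos (by linarith) hC₀
  have h5 : (H+1/2) * (1/(2*H)) * s ^ (2*H-1)
      ≤ ((H+1/2)/(2*H) + (1/2-H)*C₀ + 1) * s ^ (2*H-1) := by
    apply mul_le_mul_of_nonneg_right _ hY
    have : (H+1/2) * (1/(2*H)) = (H+1/2)/(2*H) := by ring
    linarith
  have h6 : (1/2-H) * C₀ * (t-s) ^ (2*H-1)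
      ≤ ((H+1/2)/(2*H) + (1/2-H)*C₀ + 1) * (t-s) ^ (2*H-1) := by
    apply mul_le_mul_of_nonneg_right _ hX
    linarith
  linarith [hterm1, hterm2, h5, h6]
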